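/- Let C be a crystal framework in ℝ^d, let K : ℤ^d → ℂ be a trigonometric sequence, and let u : V₀ × ℤ^d → ℂ^d be an almost periodic infinitesimal flex of C. Then the velocity field g defined by g(v,k) = the v-component of [u, R_k K] (where u is viewed as an almost periodic map ℤ^d → ℂ^{d|V₀|} and [·,·] is the mean pairing) is again an infinitesimal flex of C. -/

import Mathlib

open Filter

noncomputable section

/-- The multi-power `z^k = z₁^{k₁} ⋯ z_d^{k_d}` for `z ∈ ℂ^d`, `k ∈ ℤ^d`. -/
def zpowVec {d : ℕ} (z : Fin d → ℂ) (k : Fin d → ℤ) : ℂ := ∏ j, z j ^ (k j)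

/-- Membership in the `d`-torus `𝕋^d`. -/
def OnTorus {d : ℕ} (z : Fin d → ℂ) : Prop := ∀ j, ‖z j‖ = 1

/-- A crystal framework in `ℝ^d`: a finite motif of vertices `V` placed by `p`,
a full-rank translation lattice generated by `a₁, …, a_d`, and a finite set of
motif edges `E` with endpoints `fst e = (v, l)` and `snd e = (w, m)` standing for
the joints `p(v, l)` and `p(w, m)`.  Joints are pairwise distinct and edge vectors
are nonzero. -/
structure CrystalFramework (d : ℕ) where
  V : Type
  fintypeV : Fintype V
  decV : DecidableEq V
  E : Type
  fintypeE : Fintype E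
  p : V → Fin d → ℝ
  a : Fin d → Fin d → ℝ
  indep : LinearIndependent ℝ a
  fst : E → V × (Fin d → ℤ)
  snd : E → V × (Fin d → ℤ)
  joint_injective : Function.Injective
    (fun vk : V × (Fin d → ℤ) =>
      (fun i => p vk.1 i + ∑ j, (vk.2 j : ℝ) * a j i : Fin d → ℝ))
  edge_nonzero : ∀ e : E,
    (fun i => p (fst e).1 i + ∑ j, ((fst e).2 j : ℝ) * a j i : Fin d → ℝ) ≠
    (fun i => p (snd e).1 i + ∑ j, ((snd e).2 j : ℝ) * a j i)

attribute [instance] CrystalFramework.fintypeV CrystalFramework.decV CrystalFramework.fintypeE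

namespace CrystalFramework

variable {d : ℕ} (C : CrystalFramework d)

/-- The joint `p(v, k) = p(v) + k₁a₁ + ⋯ + k_d a_d`. -/
def joint (v : C.V) (k : Fin d → ℤ) : Fin d → ℝ :=
  fun i => C.p v i + ∑ j, (k j : ℝ) * C.a j i

/-- The edge vector `p(e) = p(v, l) - p(w, m)` for the motif edge `e = ((v,l),(w,m))`. -/
def edgeVec (e : C.E) : Fin d → ℝ :=
  fun i => C.joint (C.fst e).1 (C.fst e).2 i - C.joint (C.snd e).1 (C.snd e).2 i

/-- A complex velocity field `u` is an infinitesimal flex: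
`p(e) ⋅ (u(v, l+k) - u(w, m+k)) = 0` for every motif edge and every `k ∈ ℤ^d`. -/
def IsFlex (u : C.V × (Fin d → ℤ) → Fin d → ℂ) : Prop :=
  ∀ (e : C.E) (k : Fin d → ℤ),
    ∑ i, (C.edgeVec e i : ℂ) *
      (u ((C.fst e).1, fun j => (C.fst e).2 j + k j) i -
       u ((C.snd e).1, fun j => (C.snd e).2 j + k j) i) = 0

/-- A real velocity field `u` is an infinitesimal flex. -/
def IsRealFlex (u : C.V × (Fin d → ℤ) → Fin d → ℝ) : Prop :=
  ∀ (e : C.E) (k : Fin d → ℤ),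
    ∑ i, C.edgeVec e i *
      (u ((C.fst e).1, fun j => (C.fst e).2 j + k j) i -
       u ((C.snd e).1, fun j => (C.snd e).2 j + k j) i) = 0

/-- A complex velocity field is trivial if the flex condition holds for every pair of joints. -/
def IsTrivial (u : C.V × (Fin d → ℤ) → Fin d → ℂ) : Prop :=
  ∀ (v w : C.V) (k k' : Fin d → ℤ),
    ∑ i, ((C.joint v k i - C.joint w k' i : ℝ) : ℂ) * (u (v, k) i - u (w, k') i) = 0

/-- A real velocity field is trivial if the flex condition holds for every pair of joints. -/
def IsRealTrivial (u : C.V × (Fin d → ℤ) → Fin d → ℝ) : Prop :=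
  ∀ (v w : C.V) (k k' : Fin d → ℤ),
    ∑ i, (C.joint v k i - C.joint w k' i) * (u (v, k) i - u (w, k') i) = 0

/-- A complex velocity field is strictly periodic if `u(v,k) = u(v,0)`. -/
def StrictlyPeriodic (u : C.V × (Fin d → ℤ) → Fin d → ℂ) : Prop :=
  ∀ (v : C.V) (k : Fin d → ℤ), u (v, k) = u (v, 0)

/-- A real velocity field is strictly periodic if `u(v,k) = u(v,0)`. -/
def StrictlyPeriodicReal (u : C.V × (Fin d → ℤ) → Fin d → ℝ) : Prop :=
  ∀ (v : C.V) (k : Fin d → ℤ), u (v, k) = u (v, 0)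

/-- The `ω`-phase-periodic velocity field `b ⊗ e_ω : (v,k) ↦ ω^k b(v)`. -/
def phaseField (ω : Fin d → ℂ) (b : C.V → Fin d → ℂ) :
    C.V × (Fin d → ℤ) → Fin d → ℂ :=
  fun vk i => zpowVec ω vk.2 * b vk.1 i

/-- The symbol function `Φ_C(z)`: the row of the motif edge `e = ((v,l),(w,m))` has
entries `z̄^l p(e)` in the columns of `v` and `-z̄^m p(e)` in the columns of `w`
(in particular entries `(z̄^l - z̄^m) p(e)` in the columns of `v` when `v = w`). -/
def symbol (z : Fin d → ℂ) : Matrix C.E (C.V × Fin d) ℂ :=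
  Matrix.of fun e xi =>
    (C.edgeVec e xi.2 : ℂ) *
      ((if xi.1 = (C.fst e).1 then
          zpowVec (fun j => (starRingEnd ℂ) (z j)) (C.fst e).2 else 0) -
       (if xi.1 = (C.snd e).1 then
          zpowVec (fun j => (starRingEnd ℂ) (z j)) (C.snd e).2 else 0))

/-- The RUM spectrum `Ω(C)`: the set of `ω ∈ 𝕋^d` admitting a nonzero
`ω`-phase-periodic infinitesimal flex. -/
def RUM : Set (Fin d → ℂ) :=
  {ω | OnTorus ω ∧ ∃ b : C.V → Fin d → ℂ, b ≠ 0 ∧ C.IsFlex (C.phaseField ω b)}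

end CrystalFramework

/-- The box `{k ∈ ℤ^d : |k_j| ≤ N for all j}`. -/
def box (d : ℕ) (N : ℕ) : Finset (Fin d → ℤ) :=
  Fintype.piFinset fun _ => Finset.Icc (-(N : ℤ)) (N : ℤ)

/-- The average `(2N+1)^{-d} ∑_{|k_j| ≤ N} f(k)`. -/
def boxAvg {d : ℕ} (f : (Fin d → ℤ) → ℂ) (N : ℕ) : ℂ :=
  (((2 * N + 1 : ℕ) : ℂ) ^ d)⁻¹ * ∑ k ∈ box d N, f k

/-- `f : ℤ^d → ℂ` has mean value `L`. -/
def HasMean {d : ℕ} (f : (Fin d → ℤ) → ℂ) (L : ℂ) : Prop :=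
  Tendsto (boxAvg f) atTop (nhds L)

/-- The mean pairing `[h, g] = lim_N (2N+1)^{-d} ∑_{|k_j| ≤ N} h(k) ⬝ conj (g(k))`,
computed componentwise, has value `L`. -/
def HasMeanPairing {d : ℕ} {ι : Type} [Fintype ι]
    (h : (Fin d → ℤ) → ι → ℂ) (g : (Fin d → ℤ) → ℂ) (L : ι → ℂ) : Prop :=
  ∀ i, HasMean (fun k => h k i * (starRingEnd ℂ) (g k)) (L i)

/-- The pure frequency sequence `e_ω(k) = ω^k`. -/
def eOmega {d : ℕ} (ω : Fin d → ℂ) : (Fin d → ℤ) → ℂ := fun k => zpowVec ω k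

/-- Bohr almost periodicity for a bounded `h : ℤ^d → ℂ^ι`: for every `ε > 0`
there is `R > 0` such that every closed Euclidean ball of radius `R` in `ℝ^d`
contains an `ε`-translation vector `l` of `h`, i.e. `‖R_l h - h‖_∞ < ε`. -/
def IsBohrAP {d : ℕ} {ι : Type} [Fintype ι] (h : (Fin d → ℤ) → ι → ℂ) : Prop :=
  (∃ M : ℝ, ∀ k i, ‖h k i‖ ≤ M) ∧
  ∀ ε > (0 : ℝ), ∃ R > (0 : ℝ), ∀ c : Fin d → ℝ, ∃ l : Fin d → ℤ,
    Real.sqrt (∑ j, ((l j : ℝ) - c j) ^ 2) ≤ R ∧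
    ∀ k i, ‖h (fun j => k j - l j) i - h k i‖ < ε


/-- A scalar trigonometric sequence on `ℤ^d`: `K(k) = ∑_{ω ∈ F} c_ω ω^k`. -/
def IsTrigSeqD {d : ℕ} (K : (Fin d → ℤ) → ℂ) : Prop :=
  ∃ F : Finset (Fin d → ℂ), (∀ ω ∈ F, OnTorus ω) ∧
    ∃ c : (Fin d → ℂ) → ℂ, ∀ k, K k = ∑ ω ∈ F, c ω * zpowVec ω k

/-!
Writing `K = ∑ c_ω e_ω`, each mean `[u, R_k K]` is a finite combination of the means of
`u · e_ω̄`. These exist because `u · e_ω̄` is again almost periodic (common translation vectors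
of `u` and `e_ω̄` come from the compactness of the circle) and the box averages of a bounded
almost periodic sequence form a Cauchy sequence.

The flex property passes to the mean convolution because the mean of a bounded sequence is
translation invariant: translating the mean at the second endpoint `(w, m)` of an edge by `m - l`
aligns its kernel with the one at the first endpoint `(v, l)`, and the flex condition of `u`
then vanishes pointwise under the mean.
-/

open scoped Finset Topology

section Mean

variable {d : ℕ}

lemma mem_box_iff_norm_le {N : ℕ} {k : Fin d → ℤ} : k ∈ box d N ↔ ‖k‖ ≤ N := by
  simp only [box, Fintype.mem_piFinset, Finset.mem_Icc,
    pi_norm_le_iff_of_nonneg (Nat.cast_nonneg N), Int.norm_eq_abs, abs_le]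
  norm_cast

lemma card_box (d N : ℕ) : #(box d N) = (2 * N + 1) ^ d := by
  simp only [box, Fintype.card_piFinset, Int.card_Icc, Finset.prod_const, Finset.card_univ,
    Fintype.card_fin]
  congr 1
  omega

lemma boxAvg_sum {ι : Type*} (s : Finset ι) (f : ι → (Fin d → ℤ) → ℂ) (N : ℕ) :
    boxAvg (fun k => ∑ i ∈ s, f i k) N = ∑ i ∈ s, boxAvg (f i) N := by
  simp only [boxAvg, Finset.mul_sum]
  exact Finset.sum_comm

lemma boxAvg_const_mul (a : ℂ) (f : (Fin d → ℤ) → ℂ) (N : ℕ) :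
    boxAvg (fun k => a * f k) N = a * boxAvg f N := by
  simp only [boxAvg, ← Finset.mul_sum]
  ring

lemma boxAvg_sub (f g : (Fin d → ℤ) → ℂ) (N : ℕ) :
    boxAvg (fun k => f k - g k) N = boxAvg f N - boxAvg g N := by
  simp only [boxAvg, Finset.sum_sub_distrib, mul_sub]

lemma boxAvg_const (a : ℂ) (N : ℕ) : boxAvg (fun _ : Fin d → ℤ => a) N = a := by
  rw [boxAvg, Finset.sum_const, card_box, nsmul_eq_mul, Nat.cast_pow, inv_mul_cancel_left₀]
  exact pow_ne_zero _ (Nat.cast_ne_zero.mpr (by omega))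

lemma boxAvg_boxAvg_comm (F : (Fin d → ℤ) → (Fin d → ℤ) → ℂ) (N N' : ℕ) :
    boxAvg (fun m => boxAvg (fun k => F k m) N) N' =
      boxAvg (fun k => boxAvg (fun m => F k m) N') N := by
  simp only [boxAvg, Finset.mul_sum]
  rw [Finset.sum_comm]
  exact Finset.sum_congr rfl fun _ _ => Finset.sum_congr rfl fun _ _ => by ring

lemma norm_boxAvg_le {f : (Fin d → ℤ) → ℂ} {M : ℝ} {N : ℕ}
    (hM : ∀ k ∈ box d N, ‖f k‖ ≤ M) : ‖boxAvg f N‖ ≤ M := by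
  have hpos : (0 : ℝ) < (2 * N + 1 : ℕ) ^ d := by positivity
  rw [boxAvg, norm_mul, norm_inv, norm_pow, Complex.norm_natCast, inv_mul_le_iff₀ hpos]
  calc ‖∑ k ∈ box d N, f k‖ ≤ ∑ _k ∈ box d N, M := norm_sum_le_of_le _ hM
    _ = (2 * N + 1 : ℕ) ^ d * M := by
        rw [Finset.sum_const, card_box, nsmul_eq_mul]
        push_cast
        ring

lemma tendsto_div_two_mul_add_one (c : ℝ) :
    Tendsto (fun N : ℕ => c / (2 * N + 1)) atTop (𝓝 0) :=
  tendsto_const_nhds.div_atTop <| tendsto_atTop_add_const_right _ _ <|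
    tendsto_natCast_atTop_atTop.const_mul_atTop two_pos

namespace HasMean

variable {f g : (Fin d → ℤ) → ℂ} {L L' : ℂ}

lemma unique (hL : HasMean f L) (hL' : HasMean f L') : L = L' :=
  tendsto_nhds_unique hL hL'

lemma congr (hL : HasMean f L) (h : ∀ k, f k = g k) : HasMean g L := by
  rwa [HasMean, ← funext h]

lemma const_mul (a : ℂ) (hL : HasMean f L) : HasMean (fun k => a * f k) (a * L) := by
  rw [HasMean, funext (boxAvg_const_mul a f)]
  exact Tendsto.const_mul a hL

lemma sub (hL : HasMean f L) (hL' : HasMean g L') : HasMean (fun k => f k - g k) (L - L') := by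
  rw [HasMean, funext (boxAvg_sub f g)]
  exact Tendsto.sub hL hL'

lemma eq_zero (hL : HasMean f L) (h : ∀ k, f k = 0) : L = 0 :=
  (hL.congr h).unique <| by
    rw [HasMean, funext (boxAvg_const 0)]
    exact tendsto_const_nhds

end HasMean

lemma hasMean_sum {ι : Type*} (s : Finset ι) {f : ι → (Fin d → ℤ) → ℂ} {L : ι → ℂ}
    (h : ∀ i ∈ s, HasMean (f i) (L i)) :
    HasMean (fun k => ∑ i ∈ s, f i k) (∑ i ∈ s, L i) := by
  rw [HasMean, funext (boxAvg_sum s f)]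
  exact tendsto_finsetSum s h

end Mean

section Shift

variable {d : ℕ}

lemma card_filter_sub_notMem_box_le (N : ℕ) (t : Fin d → ℤ) :
    #{k ∈ box d N | k - t ∉ box d N} ≤ ∑ j, (t j).natAbs * (2 * N + 1) ^ (d - 1) := by
  set I := Finset.Icc (-(N : ℤ)) N
  let B : Fin d → Finset ℤ := fun j => {x ∈ I | x - t j ∉ I}
  have hBI : ∀ j, ∀ x ∈ B j, x ∈ I := fun j x hx => (Finset.mem_filter.mp hx).1
  have hcover : {k ∈ box d N | k - t ∉ box d N} ⊆
      Finset.univ.biUnion fun j => (B j).biUnion fun x => {k ∈ box d N | k j = x} := by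
    intro k hk
    simp only [box, Finset.mem_filter, Fintype.mem_piFinset, not_forall] at hk
    obtain ⟨hk, j, hj⟩ := hk
    simp only [box, Finset.mem_biUnion, Finset.mem_univ, Finset.mem_filter, Fintype.mem_piFinset,
      true_and, B, I]
    exact ⟨j, k j, ⟨hk j, hj⟩, hk, rfl⟩
  have hfiber : ∀ j, ∀ x ∈ B j, #{k ∈ box d N | k j = x} = (2 * N + 1) ^ (d - 1) := by
    intro j x hx
    rw [box, Fintype.card_filter_piFinset_const_eq_of_mem _ _ (hBI j x hx), Int.card_Icc,
      Fintype.card_fin]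
    congr 1
    omega
  have hB : ∀ j, #(B j) ≤ (t j).natAbs := fun j => by
    have hsub : B j ⊆ Finset.Ico (-N) (-N + t j) ∪ Finset.Ioc (N + t j) N := fun x hx => by
      simp only [B, I, Finset.mem_filter, Finset.mem_Icc, Finset.mem_union, Finset.mem_Ico,
        Finset.mem_Ioc] at hx ⊢
      omega
    refine (Finset.card_le_card hsub).trans <| (Finset.card_union_le _ _).trans (le_of_eq ?_)
    rw [Int.card_Ico, Int.card_Ioc, ← Int.toNat_add_toNat_neg_eq_natAbs]
    congr 2 <;> ring
  calc #{k ∈ box d N | k - t ∉ box d N}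
      ≤ ∑ j, ∑ x ∈ B j, #{k ∈ box d N | k j = x} :=
        (Finset.card_le_card hcover).trans <| Finset.card_biUnion_le.trans <|
          Finset.sum_le_sum fun _ _ => Finset.card_biUnion_le
    _ = ∑ j, #(B j) * (2 * N + 1) ^ (d - 1) :=
        Finset.sum_congr rfl fun j _ => by rw [Finset.sum_congr rfl (hfiber j), Finset.sum_const,
          smul_eq_mul]
    _ ≤ ∑ j, (t j).natAbs * (2 * N + 1) ^ (d - 1) :=
        Finset.sum_le_sum fun j _ => Nat.mul_le_mul_right _ (hB j)

lemma norm_sum_box_comp_add_sub_le {f : (Fin d → ℤ) → ℂ} {M : ℝ} (hM : ∀ k, ‖f k‖ ≤ M)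
    (N : ℕ) (t : Fin d → ℤ) :
    ‖∑ k ∈ box d N, f (k + t) - ∑ k ∈ box d N, f k‖ ≤
      2 * M * #{k ∈ box d N | k - t ∉ box d N} := by
  set S := box d N
  set T := S.map (addRightEmbedding t)
  have hST : S \ T = {k ∈ S | k - t ∉ S} := by
    ext k
    simp only [T, Finset.mem_sdiff, Finset.mem_filter, Finset.mem_map, addRightEmbedding_apply,
      not_exists, not_and]
    exact and_congr_right fun _ =>
      ⟨fun h hk => h _ hk (sub_add_cancel k t), fun h x hx hxk => h (by simpa [← hxk] using hx)⟩
  have hcard : #(T \ S) = #(S \ T) := Finset.card_sdiff_comm (Finset.card_map _)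
  have hshift : ∑ k ∈ S, f (k + t) = ∑ k ∈ T, f k :=
    (Finset.sum_map S (addRightEmbedding t) f).symm
  rw [hshift, ← Finset.sum_sdiff_sub_sum_sdiff, ← hST]
  calc ‖∑ k ∈ T \ S, f k - ∑ k ∈ S \ T, f k‖
      ≤ ‖∑ k ∈ T \ S, f k‖ + ‖∑ k ∈ S \ T, f k‖ := norm_sub_le _ _
    _ ≤ #(T \ S) * M + #(S \ T) * M := by
        gcongr <;> exact (norm_sum_le_of_le _ fun k _ => hM k).trans_eq (by simp)
    _ = 2 * M * #(S \ T) := by rw [hcard]; ring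

lemma norm_boxAvg_comp_add_sub_le {f : (Fin d → ℤ) → ℂ} {M : ℝ} (hM : ∀ k, ‖f k‖ ≤ M)
    (N : ℕ) (t : Fin d → ℤ) :
    ‖boxAvg (fun k => f (k + t)) N - boxAvg f N‖ ≤ 2 * M * (d * ‖t‖) / (2 * N + 1) := by
  have hM0 : 0 ≤ M := (norm_nonneg _).trans (hM 0)
  have hcard :
      (#{k ∈ box d N | k - t ∉ box d N} : ℝ) * (2 * N + 1) ≤ d * ‖t‖ * (2 * N + 1) ^ d :=
    calc (#{k ∈ box d N | k - t ∉ box d N} : ℝ) * (2 * N + 1)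
        ≤ (∑ j, ((t j).natAbs * (2 * N + 1) ^ (d - 1) : ℕ) : ℝ) * (2 * N + 1) := by
          gcongr
          exact_mod_cast card_filter_sub_notMem_box_le N t
      _ = ∑ j, |(t j : ℝ)| * (2 * N + 1) ^ d := by
          rw [Finset.sum_mul]
          refine Finset.sum_congr rfl fun j _ => ?_
          rw [← pow_sub_one_mul (Fin.pos j).ne']
          push_cast [Nat.cast_natAbs]
          ring
      _ ≤ ∑ _j : Fin d, ‖t‖ * (2 * N + 1) ^ d := by
          gcongr with j
          exact (Int.norm_eq_abs (t j)).symm.trans_le (norm_le_pi_norm t j)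
      _ = d * ‖t‖ * (2 * N + 1) ^ d := by simp; ring
  have hpos : (0 : ℝ) < 2 * N + 1 := by positivity
  rw [← boxAvg_sub, boxAvg, norm_mul, norm_inv, norm_pow, Complex.norm_natCast,
    le_div_iff₀ hpos]
  push_cast
  calc ((2 * N + 1 : ℝ) ^ d)⁻¹ * ‖∑ k ∈ box d N, (f (k + t) - f k)‖ * (2 * N + 1)
      ≤ ((2 * N + 1 : ℝ) ^ d)⁻¹ * (2 * M * #{k ∈ box d N | k - t ∉ box d N}) *
          (2 * N + 1) := by
        rw [Finset.sum_sub_distrib]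
        gcongr
        exact norm_sum_box_comp_add_sub_le hM N t
    _ = ((2 * N + 1 : ℝ) ^ d)⁻¹ * (2 * M) *
          (#{k ∈ box d N | k - t ∉ box d N} * (2 * N + 1)) := by ring
    _ ≤ ((2 * N + 1 : ℝ) ^ d)⁻¹ * (2 * M) * (d * ‖t‖ * (2 * N + 1) ^ d) := by gcongr
    _ = 2 * M * (d * ‖t‖) := by field_simp

lemma HasMean.comp_add {f : (Fin d → ℤ) → ℂ} {M : ℝ} {L : ℂ} (hM : ∀ k, ‖f k‖ ≤ M)
    (hf : HasMean f L) (t : Fin d → ℤ) : HasMean (fun k => f (k + t)) L := by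
  have hdiff : Tendsto (fun N => boxAvg (fun k => f (k + t)) N - boxAvg f N) atTop (𝓝 0) :=
    squeeze_zero_norm (norm_boxAvg_comp_add_sub_le hM · t) (tendsto_div_two_mul_add_one _)
  show Tendsto _ _ _
  simpa using Tendsto.add hf hdiff

end Shift

section Torus

variable {d : ℕ} {ω : Fin d → ℂ}

lemma OnTorus.ne_zero (hω : OnTorus ω) (j : Fin d) : ω j ≠ 0 :=
  norm_ne_zero_iff.mp (by rw [hω j]; exact one_ne_zero)

lemma OnTorus.conj (hω : OnTorus ω) : OnTorus fun j => (starRingEnd ℂ) (ω j) := fun j => by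
  rw [Complex.norm_conj, hω j]

lemma zpowVec_ne_zero (hω : ∀ j, ω j ≠ 0) (k : Fin d → ℤ) : zpowVec ω k ≠ 0 :=
  Finset.prod_ne_zero_iff.mpr fun j _ => zpow_ne_zero _ (hω j)

lemma zpowVec_sub (hω : ∀ j, ω j ≠ 0) (k l : Fin d → ℤ) :
    zpowVec ω (k - l) = zpowVec ω k / zpowVec ω l := by
  simp only [zpowVec, ← Finset.prod_div_distrib, Pi.sub_apply, zpow_sub₀ (hω _)]

lemma norm_zpowVec (hω : OnTorus ω) (k : Fin d → ℤ) : ‖zpowVec ω k‖ = 1 := by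
  simp [zpowVec, norm_prod, norm_zpow, hω _]

lemma conj_zpowVec (k : Fin d → ℤ) :
    (starRingEnd ℂ) (zpowVec ω k) = zpowVec (fun j => (starRingEnd ℂ) (ω j)) k := by
  simp [zpowVec, map_prod, map_zpow₀]

end Torus

def IsAlmostPeriodic {d : ℕ} {E : Type*} [SeminormedAddCommGroup E] (f : (Fin d → ℤ) → E) :
    Prop :=
  ∀ ε > 0, ∃ R, ∀ c : Fin d → ℤ, ∃ l, ‖l - c‖ ≤ R ∧ ∀ k, ‖f (k - l) - f k‖ ≤ ε

section AlmostPeriodic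

variable {d : ℕ}

lemma IsBohrAP.isAlmostPeriodic_apply {ι : Type} [Fintype ι] {h : (Fin d → ℤ) → ι → ℂ}
    (hh : IsBohrAP h) (i : ι) : IsAlmostPeriodic fun k => h k i := by
  intro ε hε
  obtain ⟨R, -, hR⟩ := hh.2 ε hε
  refine ⟨R, fun c => ?_⟩
  obtain ⟨l, hlc, hl⟩ := hR fun j => c j
  refine ⟨l, (pi_norm_le_iff_of_nonneg ((Real.sqrt_nonneg _).trans hlc)).2 fun j => ?_,
    fun k => (hl k i).le⟩
  rw [Pi.sub_apply, Int.norm_eq_abs, Int.cast_sub]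
  exact (Real.abs_le_sqrt (Finset.single_le_sum (fun j _ => sq_nonneg ((l j : ℝ) - c j))
    (Finset.mem_univ j))).trans hlc

/-- Both sides are compared with the double average `avg_{m ∈ box N'} avg_{k ∈ box N} f (k + m)`:
an `ε`-translation vector near `m` moves the inner average close to `boxAvg f N`, while
swapping the order of averaging shows that it is also close to `boxAvg f N'`. -/
lemma norm_boxAvg_sub_boxAvg_le {f : (Fin d → ℤ) → ℂ} {M ε R : ℝ} (hM : ∀ k, ‖f k‖ ≤ M)
    (hper : ∀ c, ∃ l, ‖l - c‖ ≤ R ∧ ∀ k, ‖f (k - l) - f k‖ ≤ ε) (N N' : ℕ) :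
    ‖boxAvg f N - boxAvg f N'‖ ≤
      ε + 2 * M * (d * R) / (2 * N + 1) + 2 * M * (d * N) / (2 * N' + 1) := by
  have hM0 : 0 ≤ M := (norm_nonneg _).trans (hM 0)
  set D := boxAvg (fun m => boxAvg (fun k => f (k + m)) N) N'
  have hDN : ‖D - boxAvg f N‖ ≤ ε + 2 * M * (d * R) / (2 * N + 1) := by
    rw [← boxAvg_const (boxAvg f N) N', ← boxAvg_sub]
    refine norm_boxAvg_le fun m _ => ?_
    obtain ⟨l, hlm, hl⟩ := hper m
    have hnear :
        ‖boxAvg (fun k => f (k + m)) N - boxAvg (fun k => f (k + (m - l))) N‖ ≤ ε := by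
      rw [← boxAvg_sub]
      refine norm_boxAvg_le fun k _ => ?_
      rw [norm_sub_rev, ← add_sub_assoc]
      exact hl (k + m)
    have hshift := norm_boxAvg_comp_add_sub_le hM N (m - l)
    rw [norm_sub_rev m l] at hshift
    calc ‖boxAvg (fun k => f (k + m)) N - boxAvg f N‖
        ≤ ‖boxAvg (fun k => f (k + m)) N - boxAvg (fun k => f (k + (m - l))) N‖ +
          ‖boxAvg (fun k => f (k + (m - l))) N - boxAvg f N‖ :=
            norm_sub_le_norm_sub_add_norm_sub _ _ _
      _ ≤ ε + 2 * M * (d * R) / (2 * N + 1) := by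
          gcongr
          exact hshift.trans (by gcongr)
  have hDN' : ‖D - boxAvg f N'‖ ≤ 2 * M * (d * N) / (2 * N' + 1) := by
    rw [show D = boxAvg (fun k => boxAvg (fun m => f (k + m)) N') N from
        boxAvg_boxAvg_comm (fun k m => f (k + m)) N N',
      ← boxAvg_const (boxAvg f N') N, ← boxAvg_sub]
    refine norm_boxAvg_le fun k hk => ?_
    simp only [add_comm k]
    refine (norm_boxAvg_comp_add_sub_le hM N' k).trans ?_
    gcongr
    exact mem_box_iff_norm_le.mp hk
  calc ‖boxAvg f N - boxAvg f N'‖ = ‖(D - boxAvg f N') - (D - boxAvg f N)‖ := by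
        congr 1; abel
    _ ≤ ‖D - boxAvg f N'‖ + ‖D - boxAvg f N‖ := norm_sub_le _ _
    _ ≤ _ := by linarith

lemma IsAlmostPeriodic.exists_hasMean {f : (Fin d → ℤ) → ℂ} {M : ℝ} (hM : ∀ k, ‖f k‖ ≤ M)
    (hf : IsAlmostPeriodic f) : ∃ L, HasMean f L := by
  refine cauchySeq_tendsto_of_complete <| Metric.cauchySeq_iff.2 fun ε hε => ?_
  have hε8 : 0 < ε / 8 := by positivity
  obtain ⟨R, hR⟩ := hf (ε / 8) hε8
  obtain ⟨N₀, hN₀⟩ := eventually_atTop.1 <|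
    (tendsto_div_two_mul_add_one (2 * M * (d * R))).eventually (gt_mem_nhds hε8)
  refine ⟨N₀, fun m hm n hn => ?_⟩
  obtain ⟨N', hm', hn'⟩ :=
    (((tendsto_div_two_mul_add_one (2 * M * (d * m))).eventually (gt_mem_nhds hε8)).and
      ((tendsto_div_two_mul_add_one (2 * M * (d * n))).eventually (gt_mem_nhds hε8))).exists
  have hmN' := norm_boxAvg_sub_boxAvg_le hM hR m N'
  have hnN' := norm_boxAvg_sub_boxAvg_le hM hR n N'
  have := hN₀ m hm
  have := hN₀ n hn
  refine (dist_triangle_right _ _ (boxAvg f N')).trans_lt ?_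
  rw [dist_eq_norm, dist_eq_norm]
  linarith

/-- The characters take values in the compact unit disc, so among the `ε/2`-translation vectors
of `f` finitely many represent all values `ω^l` up to `ε`; differences `l - l'` of such vectors
are then common `ε`-translation vectors, at a bounded distance from the original ones. -/
lemma IsAlmostPeriodic.exists_common_period {E : Type*} [SeminormedAddCommGroup E]
    {f : (Fin d → ℤ) → E} (hf : IsAlmostPeriodic f) {ω : Fin d → ℂ} (hω : OnTorus ω) {ε : ℝ}
    (hε : 0 < ε) :
    ∃ R, ∀ c, ∃ l, ‖l - c‖ ≤ R ∧ (∀ k, ‖f (k - l) - f k‖ ≤ ε) ∧ ‖zpowVec ω l - 1‖ ≤ ε := by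
  obtain ⟨R, hR⟩ := hf (ε / 2) (half_pos hε)
  set P := {l | ∀ k, ‖f (k - l) - f k‖ ≤ ε / 2}
  have htb : TotallyBounded (zpowVec ω '' P) :=
    (isCompact_closedBall (0 : ℂ) 1).totallyBounded.subset <| by
      rintro _ ⟨l, -, rfl⟩
      simp [norm_zpowVec hω]
  obtain ⟨Q, hQP, hQ, hcover⟩ :=
    Set.exists_subset_image_finite_and.1 (Metric.finite_approx_of_totallyBounded htb ε hε)
  obtain ⟨B, hB⟩ := isBounded_iff_forall_norm_le.1 hQ.isBounded
  refine ⟨R + B, fun c => ?_⟩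
  obtain ⟨l, hlc, hl⟩ := hR c
  obtain ⟨_, ⟨l', hl'Q, rfl⟩, hll'⟩ := Set.mem_iUnion₂.1 (hcover ⟨l, hl, rfl⟩)
  refine ⟨l - l', ?_, fun k => ?_, ?_⟩
  · calc ‖l - l' - c‖ = ‖(l - c) - l'‖ := by congr 1; abel
      _ ≤ R + B := (norm_sub_le _ _).trans (add_le_add hlc (hB l' hl'Q))
  · have h₁ := hl (k + l')
    have h₂ := hQP hl'Q (k + l')
    rw [add_sub_cancel_right, norm_sub_rev] at h₂
    calc ‖f (k - (l - l')) - f k‖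
        = ‖(f (k + l' - l) - f (k + l')) + (f (k + l') - f k)‖ := by
          rw [sub_sub_eq_add_sub, sub_add_sub_cancel]
      _ ≤ ε := (norm_add_le _ _).trans (by linarith)
  · rw [zpowVec_sub hω.ne_zero, div_sub_one (zpowVec_ne_zero hω.ne_zero l'), norm_div,
      norm_zpowVec hω, div_one, ← dist_eq_norm]
    exact (Metric.mem_ball.1 hll').le

lemma IsAlmostPeriodic.mul_zpowVec {f : (Fin d → ℤ) → ℂ} {M : ℝ} (hM : ∀ k, ‖f k‖ ≤ M)
    (hf : IsAlmostPeriodic f) {ω : Fin d → ℂ} (hω : OnTorus ω) :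
    IsAlmostPeriodic fun k => f k * zpowVec ω k := by
  intro ε hε
  have hM0 : 0 ≤ M := (norm_nonneg _).trans (hM 0)
  obtain ⟨R, hR⟩ := hf.exists_common_period hω (show 0 < ε / (1 + M) by positivity)
  refine ⟨R, fun c => ?_⟩
  obtain ⟨l, hlc, hfl, hωl⟩ := hR c
  refine ⟨l, hlc, fun k => ?_⟩
  have hsplit : f (k - l) * zpowVec ω (k - l) - f k * zpowVec ω k =
      ((f (k - l) - f k) - f k * (zpowVec ω l - 1)) * zpowVec ω (k - l) := by
    rw [zpowVec_sub hω.ne_zero]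
    field_simp [zpowVec_ne_zero hω.ne_zero l]
    ring
  calc ‖f (k - l) * zpowVec ω (k - l) - f k * zpowVec ω k‖
      = ‖(f (k - l) - f k) - f k * (zpowVec ω l - 1)‖ := by
        rw [hsplit, norm_mul, norm_zpowVec hω, mul_one]
    _ ≤ ε / (1 + M) + M * (ε / (1 + M)) := by
        refine (norm_sub_le _ _).trans (add_le_add (hfl k) ?_)
        rw [norm_mul]
        exact mul_le_mul (hM k) hωl (norm_nonneg _) hM0
    _ = ε := by field_simp

end AlmostPeriodic

section MeanConvolution

variable {d : ℕ}

lemma IsTrigSeqD.exists_bound {K : (Fin d → ℤ) → ℂ} (hK : IsTrigSeqD K) :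
    ∃ M, ∀ k, ‖K k‖ ≤ M := by
  obtain ⟨F, hF, c, hKc⟩ := hK
  refine ⟨∑ ω ∈ F, ‖c ω‖, fun k => ?_⟩
  rw [hKc]
  refine norm_sum_le_of_le _ fun ω hω => ?_
  rw [norm_mul, norm_zpowVec (hF ω hω), mul_one]

lemma IsTrigSeqD.exists_hasMean_mul_conj {K : (Fin d → ℤ) → ℂ} (hK : IsTrigSeqD K)
    {f : (Fin d → ℤ) → ℂ} {M : ℝ} (hM : ∀ k, ‖f k‖ ≤ M) (hf : IsAlmostPeriodic f)
    (k : Fin d → ℤ) : ∃ L, HasMean (fun j => f j * (starRingEnd ℂ) (K (j - k))) L := by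
  obtain ⟨F, hF, c, hKc⟩ := hK
  have hmean : ∀ ω ∈ F, ∃ L,
      HasMean (fun j => f j * zpowVec (fun i => (starRingEnd ℂ) (ω i)) j) L := fun ω hω =>
    (hf.mul_zpowVec hM (hF ω hω).conj).exists_hasMean fun j => by
      rw [norm_mul, norm_zpowVec (hF ω hω).conj, mul_one]
      exact hM j
  choose! L hL using hmean
  refine ⟨∑ ω ∈ F, (starRingEnd ℂ) (c ω) / zpowVec (fun i => (starRingEnd ℂ) (ω i)) k * L ω,
    (hasMean_sum F fun ω hω => (hL ω hω).const_mul _).congr fun j => ?_⟩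
  rw [hKc, map_sum, Finset.mul_sum]
  refine Finset.sum_congr rfl fun ω hω => ?_
  have hω' := (hF ω hω).conj.ne_zero
  rw [map_mul, conj_zpowVec, zpowVec_sub hω']
  field_simp [zpowVec_ne_zero hω' k]

/-- `g (v, k) = [u (v, ·), R_k K]` componentwise. -/
def IsMeanConvolution {V : Type*} (u : V × (Fin d → ℤ) → Fin d → ℂ) (K : (Fin d → ℤ) → ℂ)
    (g : V × (Fin d → ℤ) → Fin d → ℂ) : Prop :=
  ∀ v k i,
    HasMean (fun j => u (v, j) i * (starRingEnd ℂ) (K (fun t => j t - k t))) (g (v, k) i)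

lemma exists_isMeanConvolution {V : Type*} {u : V × (Fin d → ℤ) → Fin d → ℂ} {M : ℝ}
    (hM : ∀ v k i, ‖u (v, k) i‖ ≤ M) (hu : ∀ v i, IsAlmostPeriodic fun k => u (v, k) i)
    {K : (Fin d → ℤ) → ℂ} (hK : IsTrigSeqD K) : ∃ g, IsMeanConvolution u K g := by
  choose g hg using fun (vk : V × (Fin d → ℤ)) (i : Fin d) =>
    hK.exists_hasMean_mul_conj (hM vk.1 · i) (hu vk.1 i) vk.2
  exact ⟨g, fun v k i => hg (v, k) i⟩

lemma CrystalFramework.IsFlex.of_isMeanConvolution {C : CrystalFramework d}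
    {u : C.V × (Fin d → ℤ) → Fin d → ℂ} (hu : C.IsFlex u) {M : ℝ}
    (hM : ∀ v k i, ‖u (v, k) i‖ ≤ M) {K : (Fin d → ℤ) → ℂ} {MK : ℝ} (hK : ∀ k, ‖K k‖ ≤ MK)
    {g : C.V × (Fin d → ℤ) → Fin d → ℂ} (hg : IsMeanConvolution u K g) : C.IsFlex g := by
  intro e k
  set v := (C.fst e).1
  set l := (C.fst e).2
  set w := (C.snd e).1
  set m := (C.snd e).2
  have hshift : ∀ i, HasMean
      (fun j => u (w, j + (m - l)) i * (starRingEnd ℂ) (K (fun t => j t - (l t + k t))))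
      (g (w, fun t => m t + k t) i) := fun i => by
    have hbound :
        ∀ j, ‖u (w, j) i * (starRingEnd ℂ) (K (fun t => j t - (m t + k t)))‖ ≤ M * MK := fun j => by
      rw [norm_mul, Complex.norm_conj]
      exact mul_le_mul (hM w j i) (hK _) (norm_nonneg _) ((norm_nonneg _).trans (hM w j i))
    refine ((hg w _ i).comp_add hbound (m - l)).congr fun j => ?_
    congr 3
    funext t
    simp only [Pi.add_apply, Pi.sub_apply]
    ring
  refine (hasMean_sum Finset.univ fun i _ =>
    ((hg v (fun t => l t + k t) i).sub (hshift i)).const_mul (C.edgeVec e i : ℂ)).eq_zero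
      fun j => ?_
  have hflex := hu e (j - l)
  have hl : (fun t => l t + (j - l) t) = j := by funext t; simp
  have hm : (fun t => m t + (j - l) t) = j + (m - l) := by
    funext t
    simp only [Pi.add_apply, Pi.sub_apply]
    ring
  rw [hl, hm] at hflex
  rw [← mul_zero ((starRingEnd ℂ) (K (fun t => j t - (l t + k t)))), ← hflex, Finset.mul_sum]
  exact Finset.sum_congr rfl fun i _ => by ring

end MeanConvolution

/-- For a trigonometric sequence `K` and an almost periodic
infinitesimal flex `u` of `C`, the mean convolution `g(v,k) = [u, R_k K]` is
well defined and again an infinitesimal flex of `C`. -/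
theorem meanConvolution_isFlex {d : ℕ} (C : CrystalFramework d)
    (K : (Fin d → ℤ) → ℂ) (hK : IsTrigSeqD K)
    (u : C.V × (Fin d → ℤ) → Fin d → ℂ)
    (hu : C.IsFlex u)
    (hap : IsBohrAP (fun k (vi : C.V × Fin d) => u (vi.1, k) vi.2)) :
    (∃ g : C.V × (Fin d → ℤ) → Fin d → ℂ,
      ∀ (v : C.V) (k : Fin d → ℤ) (i : Fin d),
        HasMean (fun j => u (v, j) i * (starRingEnd ℂ) (K (fun t => j t - k t)))
          (g (v, k) i)) ∧
    ∀ g : C.V × (Fin d → ℤ) → Fin d → ℂ,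
      (∀ (v : C.V) (k : Fin d → ℤ) (i : Fin d),
        HasMean (fun j => u (v, j) i * (starRingEnd ℂ) (K (fun t => j t - k t)))
          (g (v, k) i)) →
      C.IsFlex g := by
  obtain ⟨M, hM⟩ := hap.1
  obtain ⟨MK, hMK⟩ := hK.exists_bound
  exact ⟨exists_isMeanConvolution (fun v k i => hM k (v, i))
      (fun v i => hap.isAlmostPeriodic_apply (v, i)) hK,
    fun g hg => hu.of_isMeanConvolution (fun v k i => hM k (v, i)) hMK hg⟩
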